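/- arXiv:1407.0679 — 2 statements merged into one kernel-verified Lean document; each statement's English description precedes it below -/
import Mathlib

section
/- Uniqueness of the Poisson integral representation on the upper half-plane: let η₁ and η₂ be finite Borel measures on ℝ such that ∫_ℝ P(z,x) dη₁(x) = ∫_ℝ P(z,x) dη₂(x) for every z ∈ H. Then η₁ = η₂. -/
/-!
For a bounded continuous `f`, Fubini and the symmetry `P(t + iy, a) = P(a + iy, t)` give
`∫ (P_y * f) dη = ∫ f(a) u_η(a + iy) da`, where `u_η(z) = ∫ P(z, x) dη(x)`; so the hypothesis makes
the left side the same for `η₁` and `η₂`. Substituting `a = t + yu` turns `P_y * f (t)` into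
`∫ f(t + yu) (1 + u²)⁻¹ du`, which is bounded by `π ‖f‖` and tends to `π f(t)` as `y → 0⁺`.
Dominated convergence then gives `∫ f dη₁ = ∫ f dη₂` for every bounded continuous `f`, and such
integrals determine a finite Borel measure.
-/

open MeasureTheory

/-- The Poisson kernel of the upper half-plane. -/
noncomputable def poissonKernelUHP (z : ℂ) (x : ℝ) : ℝ :=
  z.im / ((z.re - x) ^ 2 + z.im ^ 2)

open Filter Topology Real BoundedContinuousFunction

lemma poissonKernelUHP_pos {z : ℂ} (hz : 0 < z.im) (x : ℝ) : 0 < poissonKernelUHP z x :=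
  div_pos hz (by positivity)

lemma poissonKernelUHP_mk_comm (t a y : ℝ) :
    poissonKernelUHP ⟨t, y⟩ a = poissonKernelUHP ⟨a, y⟩ t := by
  simp only [poissonKernelUHP]
  ring

lemma continuous_poissonKernelUHP_mk {y : ℝ} (hy : y ≠ 0) :
    Continuous fun p : ℝ × ℝ => poissonKernelUHP ⟨p.1, y⟩ p.2 :=
  continuous_const.div (by fun_prop) fun _ => by positivity

lemma poissonKernelUHP_mk_eq_inv_mul {y : ℝ} (hy : y ≠ 0) (t a : ℝ) :
    poissonKernelUHP ⟨t, y⟩ a = y⁻¹ * (1 + (y⁻¹ * (a - t)) ^ 2)⁻¹ := by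
  simp only [poissonKernelUHP]
  field_simp
  ring

lemma integrable_poissonKernelUHP {z : ℂ} (hz : 0 < z.im) : Integrable (poissonKernelUHP z) := by
  have h := ((integrable_inv_one_add_sq.comp_mul_left' (inv_ne_zero hz.ne')).comp_sub_right
    z.re).const_mul z.im⁻¹
  convert h using 1
  funext a
  exact poissonKernelUHP_mk_eq_inv_mul hz.ne' z.re a

lemma integral_poissonKernelUHP_mul {y : ℝ} (hy : 0 < y) (t : ℝ) (g : ℝ → ℝ) :
    ∫ a, poissonKernelUHP ⟨t, y⟩ a * g a = ∫ u, (1 + u ^ 2)⁻¹ * g (t + y * u) := by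
  have hsubst : ∀ u, (1 + u ^ 2)⁻¹ * g (t + y * u) =
      y * (poissonKernelUHP ⟨t, y⟩ (t + y * u) * g (t + y * u)) := by
    intro u
    rw [poissonKernelUHP_mk_eq_inv_mul hy.ne', add_sub_cancel_left, inv_mul_cancel_left₀ hy.ne']
    field_simp
  simp_rw [hsubst, integral_const_mul]
  rw [Measure.integral_comp_mul_left (fun x => poissonKernelUHP ⟨t, y⟩ (t + x) * g (t + x)),
    integral_add_left_eq_self (fun a => poissonKernelUHP ⟨t, y⟩ a * g a) t,
    abs_of_pos (inv_pos.2 hy), smul_eq_mul, mul_inv_cancel_left₀ hy.ne']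

lemma integral_poissonKernelUHP {z : ℂ} (hz : 0 < z.im) : ∫ a, poissonKernelUHP z a = π := by
  simpa using integral_poissonKernelUHP_mul (y := z.im) hz z.re fun _ => 1

noncomputable def poissonIntegral (f : ℝ → ℝ) (z : ℂ) : ℝ :=
  ∫ a, poissonKernelUHP z a * f a

lemma norm_poissonIntegral_le (f : ℝ →ᵇ ℝ) {z : ℂ} (hz : 0 < z.im) :
    ‖poissonIntegral f z‖ ≤ π * ‖f‖ := by
  calc ‖poissonIntegral f z‖ ≤ ∫ a, poissonKernelUHP z a * ‖f‖ := by
        refine norm_integral_le_of_norm_le ((integrable_poissonKernelUHP hz).mul_const _)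
          (ae_of_all _ fun a => ?_)
        rw [norm_mul, Real.norm_of_nonneg (poissonKernelUHP_pos hz a).le]
        exact mul_le_mul_of_nonneg_left (f.norm_coe_le_norm a) (poissonKernelUHP_pos hz a).le
    _ = π * ‖f‖ := by rw [integral_mul_const, integral_poissonKernelUHP hz]

lemma tendsto_poissonIntegral (f : ℝ →ᵇ ℝ) (t : ℝ) :
    Tendsto (fun y => poissonIntegral f ⟨t, y⟩) (𝓝[>] 0) (𝓝 (π * f t)) := by
  have hcauchy : ∀ᶠ y in 𝓝[>] (0 : ℝ),
      ∫ u, (1 + u ^ 2)⁻¹ * f (t + y * u) = poissonIntegral f ⟨t, y⟩ := by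
    filter_upwards [self_mem_nhdsWithin] with y hy
    exact (integral_poissonKernelUHP_mul hy t f).symm
  have hlimit : π * f t = ∫ u, (1 + u ^ 2)⁻¹ * f (t + 0 * u) := by
    simp [integral_mul_const]
  refine Tendsto.congr' hcauchy ?_
  rw [hlimit]
  refine tendsto_integral_filter_of_dominated_convergence (fun u => (1 + u ^ 2)⁻¹ * ‖f‖)
    (Eventually.of_forall fun y => by fun_prop) (Eventually.of_forall fun y => ae_of_all _ ?_)
    (integrable_inv_one_add_sq.mul_const _) (ae_of_all _ fun u => ?_)
  · intro u
    rw [norm_mul, Real.norm_of_nonneg (by positivity)]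
    exact mul_le_mul_of_nonneg_left (f.norm_coe_le_norm _) (by positivity)
  · exact ((f.continuous.tendsto _).comp
      ((Continuous.tendsto (by fun_prop) 0).mono_left nhdsWithin_le_nhds)).const_mul _

lemma integrable_poissonKernelUHP_prod (η : Measure ℝ) [IsFiniteMeasure η] {y : ℝ} (hy : 0 < y) :
    Integrable (fun p : ℝ × ℝ => poissonKernelUHP ⟨p.1, y⟩ p.2) (η.prod volume) := by
  refine (integrable_prod_iff
    (continuous_poissonKernelUHP_mk hy.ne').aestronglyMeasurable).2 ⟨ae_of_all _ fun t =>
      integrable_poissonKernelUHP (z := ⟨t, y⟩) hy, (integrable_const π).congr (ae_of_all _ ?_)⟩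
  intro t
  simp_rw [Real.norm_of_nonneg (poissonKernelUHP_pos (z := ⟨t, y⟩) hy _).le]
  exact (integral_poissonKernelUHP (z := ⟨t, y⟩) hy).symm

lemma integral_poissonIntegral_eq_integral_mul (f : ℝ →ᵇ ℝ) (η : Measure ℝ) [IsFiniteMeasure η]
    {y : ℝ} (hy : 0 < y) :
    ∫ t, poissonIntegral f ⟨t, y⟩ ∂η = ∫ a, (∫ t, poissonKernelUHP ⟨a, y⟩ t ∂η) * f a := by
  have hint : Integrable (Function.uncurry fun t a => poissonKernelUHP ⟨t, y⟩ a * f a)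
      (η.prod volume) := by
    refine ((integrable_poissonKernelUHP_prod η hy).mul_const ‖f‖).mono'
      (((continuous_poissonKernelUHP_mk hy.ne').mul
        (f.continuous.comp continuous_snd)).aestronglyMeasurable) (ae_of_all _ fun ⟨t, a⟩ => ?_)
    rw [Function.uncurry_apply_pair, norm_mul,
      Real.norm_of_nonneg (poissonKernelUHP_pos (z := ⟨t, y⟩) hy a).le]
    exact mul_le_mul_of_nonneg_left (f.norm_coe_le_norm _) (poissonKernelUHP_pos hy _).le
  simp only [poissonIntegral]
  rw [integral_integral_swap hint]
  simp_rw [poissonKernelUHP_mk_comm _ _ y, integral_mul_const]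

lemma tendsto_integral_poissonIntegral (f : ℝ →ᵇ ℝ) (η : Measure ℝ) [IsFiniteMeasure η] :
    Tendsto (fun y => ∫ t, poissonIntegral f ⟨t, y⟩ ∂η) (𝓝[>] 0) (𝓝 (π * ∫ t, f t ∂η)) := by
  rw [← integral_const_mul]
  refine tendsto_integral_filter_of_dominated_convergence (fun _ => π * ‖f‖) ?_ ?_
    (integrable_const _) (ae_of_all _ (tendsto_poissonIntegral f))
  · filter_upwards [self_mem_nhdsWithin] with y hy
    have hcont := (continuous_poissonKernelUHP_mk (Set.mem_Ioi.1 hy).ne').mul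
      (f.continuous.comp continuous_snd)
    exact hcont.stronglyMeasurable.integral_prod_right'.aestronglyMeasurable
  · filter_upwards [self_mem_nhdsWithin] with y hy
    exact ae_of_all _ fun t => norm_poissonIntegral_le f (z := ⟨t, y⟩) hy

theorem poisson_integral_representation_unique
    (η₁ η₂ : Measure ℝ) [IsFiniteMeasure η₁] [IsFiniteMeasure η₂]
    (h : ∀ z : ℂ, 0 < z.im →
      ∫ x, poissonKernelUHP z x ∂η₁ = ∫ x, poissonKernelUHP z x ∂η₂) :
    η₁ = η₂ := by
  refine ext_of_forall_integral_eq_of_IsFiniteMeasure fun f => ?_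
  have hsmoothed : ∀ᶠ y in 𝓝[>] (0 : ℝ),
      ∫ t, poissonIntegral f ⟨t, y⟩ ∂η₁ = ∫ t, poissonIntegral f ⟨t, y⟩ ∂η₂ := by
    filter_upwards [self_mem_nhdsWithin] with y hy
    simp_rw [integral_poissonIntegral_eq_integral_mul f _ hy, h ⟨_, y⟩ hy]
  exact mul_left_cancel₀ pi_ne_zero (tendsto_nhds_unique
    ((tendsto_integral_poissonIntegral f η₁).congr' hsmoothed)
    (tendsto_integral_poissonIntegral f η₂))
end

section
/- Poisson integrals of singular measures vanish nontangentially Lebesgue-almost everywhere: let η_s be a finite Borel measure on ℝ singular with respect to Lebesgue measure and let h(z) = ∫_ℝ P(z,x) dη_s(x). Then for Lebesgue-almost every x₀ ∈ ℝ and every aperture c > 0, h(z) → 0 as z → x₀ with z in the cone Γ_c(x₀). -/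
open MeasureTheory Filter Topology

/-- The nontangential cone of aperture `c` at `x₀`. -/
def cone (x₀ c : ℝ) : Set ℂ :=
  {z : ℂ | 0 < z.im ∧ |z.re - x₀| ≤ c * z.im}

/-!
The Radon–Nikodym derivative of a singular measure vanishes a.e., so by Besicovitch
differentiation `η (closedBall x₀ r) = o(r)` at Lebesgue-almost every `x₀`. On the cone of
aperture `c` the kernel is at most `2 + 2c²` times the kernel at `x₀ + i Im z`, so it suffices
to let `y → 0⁺` along the vertical. There the layer-cake formula and
`{P ≥ t} ⊆ closedBall x₀ √(y/t)` bound the integral by `η(ℝ) y / R²` (levels `t ≤ y / R²`) plus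
`ε ∫₀^{1/y} 2√(y/t) dt = 4ε` (the other levels), as soon as
`η (closedBall x₀ r) ≤ ε |closedBall x₀ r|` for `r ≤ R`.
-/

open Set Metric Complex

theorem MeasureTheory.Measure.MutuallySingular.ae_tendsto_measure_closedBall_div
    {β : Type*} [MetricSpace β] [MeasurableSpace β] [BorelSpace β] [SecondCountableTopology β]
    [HasBesicovitchCovering β] {ρ μ : Measure β} [IsLocallyFiniteMeasure ρ]
    [IsLocallyFiniteMeasure μ] (h : ρ ⟂ₘ μ) :
    ∀ᵐ x ∂μ, Tendsto (fun r => ρ (closedBall x r) / μ (closedBall x r)) (𝓝[>] 0) (𝓝 0) := by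
  filter_upwards [Besicovitch.ae_tendsto_rnDeriv ρ μ, (Measure.rnDeriv_eq_zero ρ μ).2 h]
    with x hx hx0
  rwa [hx0] at hx

lemma lintegral_Ioc_sqrt_div {a b : ℝ} (ha : 0 ≤ a) (hb : 0 ≤ b) :
    ∫⁻ t in Ioc 0 a, ENNReal.ofReal √(b / t) = ENNReal.ofReal (2 * √(a * b)) := by
  have hrpow : EqOn (fun t => ENNReal.ofReal √(b / t))
      (fun t => ENNReal.ofReal (√b * t ^ (-(1 / 2) : ℝ))) (Ioc 0 a) := by
    intro t ht
    dsimp only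
    rw [Real.sqrt_div hb, Real.rpow_neg ht.1.le, ← Real.sqrt_eq_rpow, div_eq_mul_inv]
  have hint : IntegrableOn (fun t : ℝ => t ^ (-(1 / 2) : ℝ)) (Ioc 0 a) := by
    rw [← uIoc_of_le ha, ← intervalIntegrable_iff]
    exact intervalIntegral.intervalIntegrable_rpow' (by norm_num)
  have hnonneg : 0 ≤ᵐ[volume.restrict (Ioc 0 a)] fun t : ℝ => √b * t ^ (-(1 / 2) : ℝ) :=
    (ae_restrict_iff' measurableSet_Ioc).2 (.of_forall fun t ht => by have := ht.1; positivity)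
  rw [setLIntegral_congr_fun measurableSet_Ioc hrpow,
    ← ofReal_integral_eq_lintegral_ofReal (hint.const_mul _) hnonneg,
    integral_const_mul, ← intervalIntegral.integral_of_le ha, integral_rpow (Or.inl (by norm_num)),
    Real.sqrt_mul ha, Real.sqrt_eq_rpow a, Real.zero_rpow (by norm_num)]
  congr 1
  norm_num
  ring

lemma poissonKernelUHP_nonneg {z : ℂ} (hz : 0 < z.im) (x : ℝ) : 0 ≤ poissonKernelUHP z x := by
  unfold poissonKernelUHP; positivity

lemma poissonKernelUHP_le_inv_im {z : ℂ} (hz : 0 < z.im) (x : ℝ) :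
    poissonKernelUHP z x ≤ z.im⁻¹ := by
  unfold poissonKernelUHP
  rw [div_le_iff₀ (by positivity), ← div_eq_inv_mul, le_div_iff₀ hz]
  nlinarith [sq_nonneg (z.re - x)]

lemma continuous_poissonKernelUHP {z : ℂ} (hz : 0 < z.im) : Continuous (poissonKernelUHP z) := by
  unfold poissonKernelUHP
  exact continuous_const.div (by fun_prop) fun x => by positivity

lemma poissonKernelUHP_ofReal_add_mul_I (x₀ y x : ℝ) :
    poissonKernelUHP (x₀ + y * I) x = y / ((x₀ - x) ^ 2 + y ^ 2) := by
  simp [poissonKernelUHP]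

lemma setOf_le_poissonKernelUHP_subset_closedBall {x₀ y t : ℝ} (hy : 0 < y) (ht : 0 < t) :
    {x | t ≤ poissonKernelUHP (x₀ + y * I) x} ⊆ closedBall x₀ √(y / t) := by
  intro x hx
  rw [mem_ofPred_eq, poissonKernelUHP_ofReal_add_mul_I, le_div_iff₀ (by positivity)] at hx
  rw [mem_closedBall, Real.dist_eq, ← Real.sqrt_sq_eq_abs]
  refine Real.sqrt_le_sqrt ?_
  rw [le_div_iff₀ ht]
  nlinarith [sq_nonneg (x - x₀), mul_pos ht hy]

lemma lintegral_poissonKernelUHP_le {η : Measure ℝ} {x₀ R y : ℝ} {ε : ENNReal} (hR : 0 < R)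
    (hy : 0 < y) (hball : ∀ r ∈ Ioc 0 R, η (closedBall x₀ r) ≤ ε * volume (closedBall x₀ r)) :
    ∫⁻ x, ENNReal.ofReal (poissonKernelUHP (x₀ + y * I) x) ∂η
      ≤ η univ * ENNReal.ofReal (y / R ^ 2) + 4 * ε := by
  set f := poissonKernelUHP (x₀ + y * I)
  have him : 0 < (x₀ + y * I : ℂ).im := by simpa using hy
  have hlevel : ∀ t ∈ Ioi (0 : ℝ), η {x | t ≤ f x} ≤
      (Ioc 0 (y / R ^ 2)).indicator (fun _ => η univ) t +
        (Ioc 0 y⁻¹).indicator (fun t => ε * ENNReal.ofReal (2 * √(y / t))) t := by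
    intro t (ht : 0 < t)
    rcases le_or_gt t (y / R ^ 2) with hsmall | hmid
    · rw [indicator_of_mem (mem_Ioc.2 ⟨ht, hsmall⟩)]
      exact le_add_right (measure_mono (subset_univ _))
    rcases le_or_gt t y⁻¹ with hty | hlarge
    · have hradius : √(y / t) ≤ R := by
        rw [← Real.sqrt_sq hR.le]
        refine Real.sqrt_le_sqrt ((div_le_iff₀ ht).2 ?_)
        rw [div_lt_iff₀ (by positivity)] at hmid
        linarith
      rw [indicator_of_mem (mem_Ioc.2 ⟨ht, hty⟩), ← Real.volume_closedBall x₀]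
      exact le_add_left ((measure_mono (setOf_le_poissonKernelUHP_subset_closedBall hy ht)).trans
        (hball _ ⟨by positivity, hradius⟩))
    · have hempty : {x | t ≤ f x} = ∅ := eq_empty_of_forall_notMem fun x hx =>
        (poissonKernelUHP_le_inv_im him x).not_gt (by simpa using hlarge.trans_le hx)
      simp [hempty]
  calc ∫⁻ x, ENNReal.ofReal (f x) ∂η = ∫⁻ t in Ioi 0, η {x | t ≤ f x} :=
        lintegral_eq_lintegral_meas_le η (.of_forall (poissonKernelUHP_nonneg him))
          (continuous_poissonKernelUHP him).aemeasurable
    _ ≤ ∫⁻ t in Ioi 0, ((Ioc 0 (y / R ^ 2)).indicator (fun _ => η univ) t +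
        (Ioc 0 y⁻¹).indicator (fun t => ε * ENNReal.ofReal (2 * √(y / t))) t) :=
        setLIntegral_mono' measurableSet_Ioi hlevel
    _ ≤ ∫⁻ t, ((Ioc 0 (y / R ^ 2)).indicator (fun _ => η univ) t +
        (Ioc 0 y⁻¹).indicator (fun t => ε * ENNReal.ofReal (2 * √(y / t))) t) :=
        setLIntegral_le_lintegral _ _
    _ = η univ * ENNReal.ofReal (y / R ^ 2) + 4 * ε := by
        simp_rw [ENNReal.ofReal_mul zero_le_two, ENNReal.ofReal_ofNat]
        rw [lintegral_add_left (measurable_const.indicator measurableSet_Ioc),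
          lintegral_indicator measurableSet_Ioc, lintegral_indicator measurableSet_Ioc,
          setLIntegral_const, Real.volume_Ioc, sub_zero, lintegral_const_mul _ (by fun_prop),
          lintegral_const_mul' _ _ ENNReal.ofNat_ne_top,
          lintegral_Ioc_sqrt_div (by positivity) hy.le,
          inv_mul_cancel₀ hy.ne', Real.sqrt_one, mul_one, ENNReal.ofReal_ofNat, mul_comm ε]
        norm_num

lemma tendsto_lintegral_poissonKernelUHP_of_tendsto_measure_closedBall_div {η : Measure ℝ}
    [IsFiniteMeasure η] {x₀ : ℝ}
    (h : Tendsto (fun r => η (closedBall x₀ r) / volume (closedBall x₀ r)) (𝓝[>] 0) (𝓝 0)) :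
    Tendsto (fun y : ℝ => ∫⁻ x, ENNReal.ofReal (poissonKernelUHP (x₀ + y * I) x) ∂η)
      (𝓝[>] 0) (𝓝 0) := by
  rw [ENNReal.tendsto_nhds_zero]
  intro ε hε
  have hε₂ : 0 < ε / 2 := ENNReal.half_pos hε.ne'
  obtain ⟨R, hR, hball⟩ : ∃ R > 0, ∀ r ∈ Ioc 0 R,
      η (closedBall x₀ r) ≤ ε / 2 / 4 * volume (closedBall x₀ r) := by
    obtain ⟨R, hR, hsub⟩ := mem_nhdsGT_iff_exists_Ioc_subset.1
      (h.eventually (ge_mem_nhds (ENNReal.div_pos hε₂.ne' (by norm_num : (4 : ENNReal) ≠ ⊤))))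
    refine ⟨R, hR, fun r hr => ?_⟩
    have hvol : volume (closedBall x₀ r) ≠ 0 := by
      simpa [Real.volume_closedBall] using hr.1
    exact (ENNReal.div_le_iff hvol measure_closedBall_lt_top.ne).1 (hsub hr)
  have htail : Tendsto (fun y : ℝ => η univ * ENNReal.ofReal (y / R ^ 2)) (𝓝[>] 0) (𝓝 0) := by
    have hcont : Continuous fun y : ℝ => η univ * ENNReal.ofReal (y / R ^ 2) :=
      ENNReal.continuous_const_mul (measure_ne_top η univ) |>.comp
        (ENNReal.continuous_ofReal.comp (continuous_id.div_const _))
    simpa using hcont.tendsto 0 |>.mono_left nhdsWithin_le_nhds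
  filter_upwards [self_mem_nhdsWithin, htail.eventually (ge_mem_nhds hε₂)] with y hy htail_le
  calc ∫⁻ x, ENNReal.ofReal (poissonKernelUHP (x₀ + y * I) x) ∂η
      ≤ η univ * ENNReal.ofReal (y / R ^ 2) + 4 * (ε / 2 / 4) :=
        lintegral_poissonKernelUHP_le hR hy hball
    _ ≤ ε / 2 + ε / 2 := by
        rw [ENNReal.mul_div_cancel (by norm_num) (by norm_num)]
        gcongr
    _ = ε := ENNReal.add_halves ε

lemma poissonKernelUHP_le_of_mem_cone {x₀ c : ℝ} {z : ℂ} (hz : z ∈ cone x₀ c) (x : ℝ) :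
    poissonKernelUHP z x ≤ (2 + 2 * c ^ 2) * poissonKernelUHP (x₀ + z.im * I) x := by
  obtain ⟨hy, hcone⟩ := hz
  rw [poissonKernelUHP_ofReal_add_mul_I, poissonKernelUHP, mul_div_assoc',
    div_le_div_iff₀ (by positivity) (by positivity)]
  have hre : (z.re - x₀) ^ 2 ≤ c ^ 2 * z.im ^ 2 := by
    rw [← mul_pow, ← sq_abs]
    exact pow_le_pow_left₀ (abs_nonneg _) hcone 2
  have hdist : (x₀ - x) ^ 2 + z.im ^ 2 ≤ (2 + 2 * c ^ 2) * ((z.re - x) ^ 2 + z.im ^ 2) := by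
    nlinarith [sq_nonneg (2 * z.re - x₀ - x)]
  nlinarith [mul_le_mul_of_nonneg_left hdist hy.le]

lemma lintegral_poissonKernelUHP_le_of_mem_cone {η : Measure ℝ} {x₀ c : ℝ} {z : ℂ}
    (hz : z ∈ cone x₀ c) :
    ∫⁻ x, ENNReal.ofReal (poissonKernelUHP z x) ∂η ≤
      ENNReal.ofReal (2 + 2 * c ^ 2) *
        ∫⁻ x, ENNReal.ofReal (poissonKernelUHP (x₀ + z.im * I) x) ∂η := by
  rw [← lintegral_const_mul' _ _ ENNReal.ofReal_ne_top]
  refine lintegral_mono fun x => ?_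
  rw [← ENNReal.ofReal_mul (by positivity)]
  exact ENNReal.ofReal_le_ofReal (poissonKernelUHP_le_of_mem_cone hz x)

lemma tendsto_im_nhdsWithin_cone (x₀ c : ℝ) :
    Tendsto Complex.im (𝓝[cone x₀ c] (x₀ : ℂ)) (𝓝[>] 0) :=
  tendsto_nhdsWithin_of_tendsto_nhds_of_eventually_within _
    (by simpa using continuous_im.continuousWithinAt (s := cone x₀ c) (x := (x₀ : ℂ)) |>.tendsto)
    (eventually_mem_nhdsWithin.mono fun _ hz => hz.1)

lemma integral_poissonKernelUHP_eq_toReal_lintegral (η : Measure ℝ) {z : ℂ} (hz : 0 < z.im) :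
    ∫ x, poissonKernelUHP z x ∂η = (∫⁻ x, ENNReal.ofReal (poissonKernelUHP z x) ∂η).toReal :=
  integral_eq_lintegral_of_nonneg_ae (.of_forall (poissonKernelUHP_nonneg hz))
    (continuous_poissonKernelUHP hz).aestronglyMeasurable

theorem singular_poisson_integral_vanishes
    (η_s : Measure ℝ) [IsFiniteMeasure η_s]
    (hsing : η_s.MutuallySingular MeasureTheory.volume) :
    ∀ᵐ x₀ : ℝ, ∀ c > (0 : ℝ),
      Tendsto (fun z : ℂ => ∫ x, poissonKernelUHP z x ∂η_s)
        (𝓝[cone x₀ c] (x₀ : ℂ)) (𝓝 0) := by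
  filter_upwards [hsing.ae_tendsto_measure_closedBall_div] with x₀ hx₀ c _
  have hvertical := (tendsto_lintegral_poissonKernelUHP_of_tendsto_measure_closedBall_div hx₀).comp
    (tendsto_im_nhdsWithin_cone x₀ c)
  have hdominant := ENNReal.Tendsto.const_mul (a := ENNReal.ofReal (2 + 2 * c ^ 2)) hvertical
    (.inr ENNReal.ofReal_ne_top)
  rw [mul_zero] at hdominant
  have hlintegral : Tendsto (fun z : ℂ => ∫⁻ x, ENNReal.ofReal (poissonKernelUHP z x) ∂η_s)
      (𝓝[cone x₀ c] (x₀ : ℂ)) (𝓝 0) :=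
    tendsto_of_tendsto_of_tendsto_of_le_of_le' tendsto_const_nhds hdominant
      (.of_forall fun _ => zero_le)
      (eventually_mem_nhdsWithin.mono fun _ hz => lintegral_poissonKernelUHP_le_of_mem_cone hz)
  simpa using ((ENNReal.tendsto_toReal ENNReal.zero_ne_top).comp hlintegral).congr'
    (eventually_mem_nhdsWithin.mono fun z hz =>
      (integral_poissonKernelUHP_eq_toReal_lintegral η_s hz.1).symm)
end
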